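/- arXiv:quant-ph/0211002 — 6 statements merged into one kernel-verified Lean document; each statement's English description precedes it below -/
import Mathlib

section
/- If P is a complex unitary n×n matrix satisfying P = Pᵗ (symmetric), then there exists O ∈ SO(n) and a diagonal matrix Δ whose entries all have absolute value 1, such that P = O Δ Oᵗ. -/
open Matrix

-- Step 1: diagonalization from an eigenbasis
lemma diag_of_eigenbasis {n : Type*} [Fintype n] [DecidableEq n]
    (A : Matrix n n ℝ) (v : OrthonormalBasis n ℝ (EuclideanSpace ℝ n)) (a : n → ℝ)
    (hv : ∀ j, A *ᵥ ⇑(v j) = a j • ⇑(v j)) :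
    star ((EuclideanSpace.basisFun n ℝ).toBasis.toMatrix v.toBasis) * A *
      ((EuclideanSpace.basisFun n ℝ).toBasis.toMatrix v.toBasis) = diagonal a := by
  set O := (EuclideanSpace.basisFun n ℝ).toBasis.toMatrix v.toBasis with hO
  have hOmem : O ∈ Matrix.unitaryGroup n ℝ :=
    (EuclideanSpace.basisFun n ℝ).toMatrix_orthonormalBasis_mem_unitary v
  have hOmul : ∀ j, O *ᵥ Pi.single j 1 = ⇑(v j) := by
    intro j
    have : ∀ i, O i j = v j i := fun i => rfl
    simp only [mulVec_single, mul_one, MulOpposite.op_one, one_smul]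
    ext i; exact this i
  have hstar : ∀ j, (star O) *ᵥ ⇑(v j) = Pi.single j 1 := by
    intro j
    rw [← hOmul, mulVec_mulVec, Matrix.UnitaryGroup.star_mul_self ⟨O, hOmem⟩, one_mulVec]
  apply Matrix.toEuclideanLin.injective
  apply Module.Basis.ext (EuclideanSpace.basisFun n ℝ).toBasis
  intro i
  simp only [toEuclideanLin_apply, OrthonormalBasis.coe_toBasis, EuclideanSpace.basisFun_apply,
    EuclideanSpace.ofLp_single, ← mulVec_mulVec, hOmul, hv, mulVec_smul, hstar,
    Matrix.diagonal_mulVec_single, mul_one]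
  apply PiLp.ext
  intro j
  simp only [PiLp.toLp_apply, Pi.smul_apply, Pi.single_apply, PiLp.smul_apply, EuclideanSpace.single_apply, smul_eq_mul, mul_ite, mul_one, mul_zero]

-- Step 2: simultaneous diagonalization of commuting real symmetric matrices
lemma simul_diag {n : ℕ} (A B : Matrix (Fin n) (Fin n) ℝ)
    (hA : A.IsHermitian) (hB : B.IsHermitian) (hAB : A * B = B * A) :
    ∃ O : Matrix (Fin n) (Fin n) ℝ, O ∈ Matrix.orthogonalGroup (Fin n) ℝ ∧
      ∃ a b : Fin n → ℝ, A = O * diagonal a * Oᵀ ∧ B = O * diagonal b * Oᵀ := by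
  classical
  have hn : Module.finrank ℝ (EuclideanSpace ℝ (Fin n)) = n := finrank_euclideanSpace_fin
  have sTA : (Matrix.toEuclideanLin A).IsSymmetric := isHermitian_iff_isSymmetric.1 hA
  have sTB : (Matrix.toEuclideanLin B).IsSymmetric := isHermitian_iff_isSymmetric.1 hB
  have hmul : ∀ M N : Matrix (Fin n) (Fin n) ℝ,
      Matrix.toEuclideanLin M * Matrix.toEuclideanLin N = Matrix.toEuclideanLin (M * N) := by
    intro M N
    apply LinearMap.ext
    intro x
    simp [Module.End.mul_apply, Matrix.toEuclideanLin_apply, Matrix.mulVec_mulVec]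
  have hcomm : Commute (Matrix.toEuclideanLin A) (Matrix.toEuclideanLin B) := by
    unfold Commute SemiconjBy
    rw [hmul, hmul, hAB]
  have hInt0 := LinearMap.IsSymmetric.directSum_isInternal_of_commute sTA sTB hcomm
  set V : ℝ × ℝ → Submodule ℝ (EuclideanSpace ℝ (Fin n)) := fun i =>
    Module.End.eigenspace (Matrix.toEuclideanLin A) i.2 ⊓
      Module.End.eigenspace (Matrix.toEuclideanLin B) i.1 with hVdef
  have hInt : DirectSum.IsInternal (fun i : {p : ℝ × ℝ // V p ≠ ⊥} => V i) :=
    DirectSum.isInternal_ne_bot_iff.2 hInt0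
  have hfin : Finite {p : ℝ × ℝ // V p ≠ ⊥} :=
    WellFoundedGT.finite_of_iSupIndep
      (hInt0.submodule_iSupIndep.comp Subtype.coe_injective) (fun i => i.2)
  have := Fintype.ofFinite {p : ℝ × ℝ // V p ≠ ⊥}
  have hOrth0 := LinearMap.IsSymmetric.orthogonalFamily_eigenspace_inf_eigenspace sTA sTB
  have hOrth : OrthogonalFamily ℝ (fun i : {p : ℝ × ℝ // V p ≠ ⊥} => V i)
      (fun i => (V i).subtypeₗᵢ) := fun i j hij => hOrth0 (Subtype.coe_ne_coe.2 hij)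
  let v : OrthonormalBasis (Fin n) ℝ (EuclideanSpace ℝ (Fin n)) :=
    hInt.subordinateOrthonormalBasis hn hOrth
  let a : Fin n → ℝ := fun j => (hInt.subordinateOrthonormalBasisIndex hn j hOrth).val.2
  let b : Fin n → ℝ := fun j => (hInt.subordinateOrthonormalBasisIndex hn j hOrth).val.1
  have hmem : ∀ j, v j ∈ Module.End.eigenspace (Matrix.toEuclideanLin A) (a j) ⊓
      Module.End.eigenspace (Matrix.toEuclideanLin B) (b j) :=
    fun j => hInt.subordinateOrthonormalBasis_subordinate hn j hOrth
  have hvA : ∀ j, A *ᵥ ⇑(v j) = a j • ⇑(v j) := by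
    intro j
    have h := Module.End.mem_eigenspace_iff.1 (hmem j).1
    have := congrArg (WithLp.equiv 2 (Fin n → ℝ)) h
    simpa [Matrix.toEuclideanLin_apply] using this
  have hvB : ∀ j, B *ᵥ ⇑(v j) = b j • ⇑(v j) := by
    intro j
    have h := Module.End.mem_eigenspace_iff.1 (hmem j).2
    have := congrArg (WithLp.equiv 2 (Fin n → ℝ)) h
    simpa [Matrix.toEuclideanLin_apply] using this
  set O := (EuclideanSpace.basisFun (Fin n) ℝ).toBasis.toMatrix v.toBasis with hOdef
  have hOmem : O ∈ Matrix.orthogonalGroup (Fin n) ℝ :=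
    (EuclideanSpace.basisFun (Fin n) ℝ).toMatrix_orthonormalBasis_mem_unitary v
  have hstar : star O = Oᵀ := rfl
  have hdA := diag_of_eigenbasis A v a hvA
  have hdB := diag_of_eigenbasis B v b hvB
  rw [← hOdef, hstar] at hdA hdB
  have hOO : O * Oᵀ = 1 := by
    simpa [hstar] using Matrix.mem_unitaryGroup_iff.mp hOmem
  have hOO' : Oᵀ * O = 1 := by
    simpa [hstar] using Matrix.mem_unitaryGroup_iff'.mp hOmem
  refine ⟨O, hOmem, a, b, ?_, ?_⟩
  · rw [← hdA]; rw [show O * (Oᵀ * A * O) * Oᵀ = (O * Oᵀ) * A * (O * Oᵀ) by noncomm_ring,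
      hOO, one_mul, mul_one]
  · rw [← hdB]; rw [show O * (Oᵀ * B * O) * Oᵀ = (O * Oᵀ) * B * (O * Oᵀ) by noncomm_ring,
      hOO, one_mul, mul_one]

-- Step 3: arrange det = 1
lemma simul_diag_det_one {n : ℕ} (A B : Matrix (Fin n) (Fin n) ℝ)
    (hA : A.IsHermitian) (hB : B.IsHermitian) (hAB : A * B = B * A) :
    ∃ O : Matrix (Fin n) (Fin n) ℝ, O ∈ Matrix.orthogonalGroup (Fin n) ℝ ∧ O.det = 1 ∧
      ∃ a b : Fin n → ℝ, A = O * diagonal a * Oᵀ ∧ B = O * diagonal b * Oᵀ := by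
  obtain ⟨O, hO, a, b, hAe, hBe⟩ := simul_diag A B hA hB hAB
  have hstar : star O = Oᵀ := rfl
  have hOO : O * Oᵀ = 1 := by simpa [hstar] using Matrix.mem_unitaryGroup_iff.mp hO
  have hdet2 : O.det * O.det = 1 := by
    have h := congrArg Matrix.det hOO
    rwa [Matrix.det_mul, Matrix.det_transpose, Matrix.det_one] at h
  rcases mul_self_eq_one_iff.mp hdet2 with h1 | hm1
  · exact ⟨O, hO, h1, a, b, hAe, hBe⟩
  rcases Nat.eq_zero_or_pos n with hn0 | hn
  · exfalso
    subst hn0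
    rw [Matrix.det_fin_zero] at hm1
    norm_num at hm1
  set i₀ : Fin n := ⟨0, hn⟩
  set s : Fin n → ℝ := fun i => if i = i₀ then -1 else 1 with hs
  have hss : ∀ i, s i * s i = 1 := by
    intro i; by_cases h : i = i₀ <;> simp [hs, h]
  set E := diagonal s with hE
  have hEE : E * Eᵀ = 1 := by
    rw [hE, Matrix.diagonal_transpose, Matrix.diagonal_mul_diagonal]
    rw [show (fun i => s i * s i) = fun _ => (1 : ℝ) from funext hss, Matrix.diagonal_one]
  have hdetE : E.det = -1 := by
    rw [hE, Matrix.det_diagonal]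
    rw [show (∏ i, s i) = -1 from ?_]
    rw [hs]
    simp
  have hconj : ∀ c : Fin n → ℝ, E * diagonal c * Eᵀ = diagonal c := by
    intro c
    rw [hE, Matrix.diagonal_transpose, Matrix.diagonal_mul_diagonal,
      Matrix.diagonal_mul_diagonal]
    have hfun : (fun i => s i * c i * s i) = c := by
      funext i
      calc s i * c i * s i = c i * (s i * s i) := by ring
      _ = c i := by rw [hss i, mul_one]
    rw [hfun]
  refine ⟨O * E, ?_, ?_, a, b, ?_, ?_⟩
  · rw [Matrix.mem_unitaryGroup_iff]
    rw [show star (O * E) = Eᵀ * Oᵀ from by rw [Matrix.star_mul, hstar]; rfl]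
    calc O * E * (Eᵀ * Oᵀ) = O * (E * Eᵀ) * Oᵀ := by noncomm_ring
    _ = 1 := by rw [hEE, mul_one, hOO]
  · rw [Matrix.det_mul, hm1, hdetE]; norm_num
  · rw [hAe, Matrix.transpose_mul]
    calc O * diagonal a * Oᵀ = O * (E * diagonal a * Eᵀ) * Oᵀ := by rw [hconj]
    _ = O * E * diagonal a * (Eᵀ * Oᵀ) := by noncomm_ring
  · rw [hBe, Matrix.transpose_mul]
    calc O * diagonal b * Oᵀ = O * (E * diagonal b * Eᵀ) * Oᵀ := by rw [hconj]
    _ = O * E * diagonal b * (Eᵀ * Oᵀ) := by noncomm_ring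

-- map is multiplicative for ofReal
lemma map_ofReal_mul {n : ℕ} (X Y : Matrix (Fin n) (Fin n) ℝ) :
    (X * Y).map Complex.ofReal = X.map Complex.ofReal * Y.map Complex.ofReal := by
  ext i j
  simp [Matrix.mul_apply, Matrix.map_apply]

lemma map_ofReal_add {n : ℕ} (X Y : Matrix (Fin n) (Fin n) ℝ) :
    (X + Y).map Complex.ofReal = X.map Complex.ofReal + Y.map Complex.ofReal := by
  ext i j
  simp [Matrix.map_apply]

-- extraction of real and imaginary parts of a matrix identity
lemma extract_parts {n : ℕ} (X Y : Matrix (Fin n) (Fin n) ℝ)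
    (h : X.map Complex.ofReal + Complex.I • Y.map Complex.ofReal = 1) : X = 1 ∧ Y = 0 := by
  have h' : ∀ i j, (X i j : ℂ) + Complex.I * (Y i j : ℂ) = if i = j then 1 else 0 := by
    intro i j
    have h2 : (X.map Complex.ofReal + Complex.I • Y.map Complex.ofReal) i j
        = (1 : Matrix (Fin n) (Fin n) ℂ) i j := by rw [h]
    simpa [Matrix.add_apply, Matrix.smul_apply, Matrix.map_apply, Matrix.one_apply,
      smul_eq_mul] using h2
  constructor
  · ext i j
    have hcc := h' i j
    by_cases hij : i = j
    · subst hij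
      simp only [if_pos rfl] at hcc
      have := congrArg Complex.re hcc
      simpa using this
    · simp only [if_neg hij] at hcc
      have := congrArg Complex.re hcc
      simpa [Matrix.one_apply, hij] using this
  · ext i j
    have hcc := h' i j
    by_cases hij : i = j
    · subst hij
      simp only [if_pos rfl] at hcc
      have := congrArg Complex.im hcc
      simpa using this
    · simp only [if_neg hij] at hcc
      have := congrArg Complex.im hcc
      simpa [hij] using this

theorem symmetric_unitary_spectral (n : ℕ) (P : Matrix (Fin n) (Fin n) ℂ)
    (hP : P ∈ Matrix.unitaryGroup (Fin n) ℂ) (hsymm : P = Pᵀ) :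
    ∃ O : Matrix (Fin n) (Fin n) ℝ, O ∈ Matrix.orthogonalGroup (Fin n) ℝ ∧ O.det = 1 ∧
      ∃ d : Fin n → ℂ, (∀ i, ‖d i‖ = 1) ∧
        P = (O.map Complex.ofReal) * Matrix.diagonal d * (O.map Complex.ofReal)ᵀ := by
  classical
  set A : Matrix (Fin n) (Fin n) ℝ := Matrix.of fun i j => (P i j).re with hAdef
  set B : Matrix (Fin n) (Fin n) ℝ := Matrix.of fun i j => (P i j).im with hBdef
  have hPdec : P = A.map Complex.ofReal + Complex.I • B.map Complex.ofReal := by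
    ext i j
    simp [hAdef, hBdef, Matrix.add_apply, Matrix.smul_apply, Matrix.map_apply, smul_eq_mul]
    apply Complex.ext <;> simp
  have hPsym : ∀ i j, P j i = P i j := by
    intro i j
    conv_lhs => rw [hsymm]
    rfl
  have hstarP : star P = A.map Complex.ofReal - Complex.I • B.map Complex.ofReal := by
    ext i j
    have : star P i j = (starRingEnd ℂ) (P j i) := rfl
    rw [this, hPsym i j]
    simp [hAdef, hBdef, Matrix.sub_apply, Matrix.smul_apply, Matrix.map_apply, smul_eq_mul]
    apply Complex.ext <;> simp
  set M := A.map Complex.ofReal with hM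
  set N := B.map Complex.ofReal with hN
  have expand : (M + Complex.I • N) * (M - Complex.I • N)
      = M * M + N * N + Complex.I • (N * M - M * N) := by
    simp only [mul_sub, add_mul, smul_mul_assoc, mul_smul_comm, smul_smul, smul_add,
      Complex.I_mul_I, neg_smul, one_smul, smul_sub, neg_one_smul]
    abel
  have h1 : P * star P = 1 := Matrix.mem_unitaryGroup_iff.mp hP
  rw [hstarP, hPdec, expand] at h1
  have key : (A * A + B * B).map Complex.ofReal
      + Complex.I • (B * A - A * B).map Complex.ofReal = 1 := by
    rw [← h1]
    congr 1
    · rw [map_ofReal_add, map_ofReal_mul, map_ofReal_mul]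
    · congr 1
      have : (B * A - A * B).map Complex.ofReal
          = (B * A).map Complex.ofReal - (A * B).map Complex.ofReal := by
        ext i j; simp [Matrix.map_apply, Matrix.sub_apply]
      rw [this, map_ofReal_mul, map_ofReal_mul]
  obtain ⟨hsum, hcommBA⟩ := extract_parts _ _ key
  have hABcomm : A * B = B * A := by
    have := sub_eq_zero.mp hcommBA
    exact this.symm
  have hAherm : A.IsHermitian := by
    ext i j
    simp only [Matrix.conjTranspose_apply]
    have : A j i = A i j := by
      simp only [hAdef, Matrix.of_apply]
      rw [hPsym i j]
    simpa using this
  have hBherm : B.IsHermitian := by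
    ext i j
    simp only [Matrix.conjTranspose_apply]
    have : B j i = B i j := by
      simp only [hBdef, Matrix.of_apply]
      rw [hPsym i j]
    simpa using this
  obtain ⟨O, hO, hdet, a, b, hAe, hBe⟩ := simul_diag_det_one A B hAherm hBherm hABcomm
  have hstar : star O = Oᵀ := rfl
  have hOO : O * Oᵀ = 1 := by simpa [hstar] using Matrix.mem_unitaryGroup_iff.mp hO
  have hOO' : Oᵀ * O = 1 := by simpa [hstar] using Matrix.mem_unitaryGroup_iff'.mp hO
  have hdAe : Oᵀ * A * O = diagonal a := by
    rw [hAe]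
    calc Oᵀ * (O * diagonal a * Oᵀ) * O = (Oᵀ * O) * diagonal a * (Oᵀ * O) := by noncomm_ring
    _ = diagonal a := by rw [hOO', one_mul, mul_one]
  have hdBe : Oᵀ * B * O = diagonal b := by
    rw [hBe]
    calc Oᵀ * (O * diagonal b * Oᵀ) * O = (Oᵀ * O) * diagonal b * (Oᵀ * O) := by noncomm_ring
    _ = diagonal b := by rw [hOO', one_mul, mul_one]
  have h5 : diagonal a * diagonal a + diagonal b * diagonal b = 1 := by
    rw [← hdAe, ← hdBe]
    calc (Oᵀ * A * O) * (Oᵀ * A * O) + (Oᵀ * B * O) * (Oᵀ * B * O)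
        = Oᵀ * A * (O * Oᵀ) * A * O + Oᵀ * B * (O * Oᵀ) * B * O := by noncomm_ring
    _ = Oᵀ * (A * A + B * B) * O := by rw [hOO]; noncomm_ring
    _ = 1 := by rw [hsum, mul_one, hOO']
  have habs : ∀ i, a i * a i + b i * b i = 1 := by
    intro i
    have h6 : (diagonal a * diagonal a + diagonal b * diagonal b) i i
        = (1 : Matrix (Fin n) (Fin n) ℝ) i i := by rw [h5]
    simpa [Matrix.diagonal_mul_diagonal, Matrix.add_apply, Matrix.diagonal_apply_eq,
      Matrix.one_apply_eq] using h6
  refine ⟨O, hO, hdet, fun i => (a i : ℂ) + (b i : ℂ) * Complex.I, ?_, ?_⟩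
  · intro i
    have hre : ((a i : ℂ) + (b i : ℂ) * Complex.I).re = a i := by simp
    have him : ((a i : ℂ) + (b i : ℂ) * Complex.I).im = b i := by simp
    have hsq : (‖(a i : ℂ) + (b i : ℂ) * Complex.I‖) ^ 2 = 1 := by
      rw [Complex.sq_norm, Complex.normSq_apply, hre, him, habs i]
    nlinarith [norm_nonneg ((a i : ℂ) + (b i : ℂ) * Complex.I), hsq]
  · have hdiag : diagonal (fun i => (a i : ℂ) + (b i : ℂ) * Complex.I)
        = (diagonal a).map Complex.ofReal + Complex.I • (diagonal b).map Complex.ofReal := by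
      ext i j
      by_cases h : i = j
      · subst h
        simp [Matrix.diagonal_apply_eq, Matrix.map_apply, Matrix.add_apply, Matrix.smul_apply,
          smul_eq_mul]
        ring
      · simp [Matrix.diagonal_apply_ne _ h, Matrix.map_apply, Matrix.add_apply,
          Matrix.smul_apply, h]
    rw [hdiag, hPdec, hM, hN, hAe, hBe]
    rw [map_ofReal_mul, map_ofReal_mul, map_ofReal_mul, map_ofReal_mul]
    rw [show (Oᵀ).map Complex.ofReal = (O.map Complex.ofReal)ᵀ from Matrix.transpose_map]
    rw [mul_add, add_mul, mul_smul_comm, smul_mul_assoc]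
end

section
/- For any A, B ∈ SU(2), the conjugated matrix E* (A ⊗ B) E is a real orthogonal matrix in SO(4), where E is the entangler matrix. -/
open Matrix Complex Kronecker

noncomputable def entangler : Matrix (Fin 4) (Fin 4) ℂ :=
  ((Real.sqrt 2 : ℂ))⁻¹ • !![1, I, 0, 0; 0, 0, I, 1; 0, 0, I, -1; 1, -I, 0, 0]

/-! For `A ∈ SU(2)` the adjugate formula gives `conj A = J A Jᴴ` with `J = !![0, 1; -1, 0]`
(that is, `i σ_y`), hence `conj (A ⊗ B) = S (A ⊗ B) Sᴴ` for the orthogonal matrix `S = J ⊗ J`.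
The magic basis is adapted to this symmetry: `conj E = S E`. Consequently
`M = Eᴴ (A ⊗ B) E` satisfies `conj M = M`, so `M` is real, and a real special unitary matrix is
special orthogonal. -/

namespace Matrix

variable {R : Type*} [CommRing R] [StarRing R] {m n : Type*}

section Conjugation

theorem map_starRingEnd_conjTranspose (M : Matrix m n R) :
    Mᴴ.map (starRingEnd R) = (M.map (starRingEnd R))ᴴ :=
  rfl

theorem map_starRingEnd_kronecker (A : Matrix m m R) (B : Matrix n n R) :
    (A ⊗ₖ B).map (starRingEnd R) = A.map (starRingEnd R) ⊗ₖ B.map (starRingEnd R) := by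
  ext i j
  simp [kroneckerMap_apply]

variable [Fintype m] [Fintype n]

theorem map_starRingEnd_kronecker_eq_mul_mul {A P : Matrix m m R} {B Q : Matrix n n R}
    (hA : A.map (starRingEnd R) = P * A * Pᴴ) (hB : B.map (starRingEnd R) = Q * B * Qᴴ) :
    (A ⊗ₖ B).map (starRingEnd R) = (P ⊗ₖ Q) * (A ⊗ₖ B) * (P ⊗ₖ Q)ᴴ := by
  rw [map_starRingEnd_kronecker, hA, hB, conjTranspose_kronecker, mul_kronecker_mul,
    mul_kronecker_mul]

theorem map_starRingEnd_reindex_eq_mul_mul (e : m ≃ n) {X P : Matrix m m R}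
    (h : X.map (starRingEnd R) = P * X * Pᴴ) :
    (reindex e e X).map (starRingEnd R) = reindex e e P * reindex e e X * (reindex e e P)ᴴ := by
  rw [conjTranspose_reindex, reindex_apply, reindex_apply, reindex_apply, submatrix_mul_equiv,
    submatrix_mul_equiv, ← h]
  rfl

end Conjugation

variable [Fintype m] [DecidableEq m] [Fintype n] [DecidableEq n]

theorem map_starRingEnd_conjTranspose_mul_mul {E K S : Matrix n n R} (hS : Sᴴ * S = 1)
    (hE : E.map (starRingEnd R) = S * E) (hK : K.map (starRingEnd R) = S * K * Sᴴ) :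
    (Eᴴ * K * E).map (starRingEnd R) = Eᴴ * K * E :=
  calc (Eᴴ * K * E).map (starRingEnd R) = (S * E)ᴴ * (S * K * Sᴴ) * (S * E) := by
        rw [Matrix.map_mul, Matrix.map_mul, map_starRingEnd_conjTranspose, hE, hK]
    _ = Eᴴ * (Sᴴ * S) * K * (Sᴴ * S) * E := by
        simp only [conjTranspose_mul, Matrix.mul_assoc]
    _ = Eᴴ * K * E := by rw [hS, Matrix.mul_one, Matrix.mul_one]

theorem reindex_mem_unitaryGroup (e : m ≃ n) {U : Matrix m m R}
    (hU : U ∈ unitaryGroup m R) : reindex e e U ∈ unitaryGroup n R := by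
  rw [mem_unitaryGroup_iff', star_eq_conjTranspose, conjTranspose_reindex, reindex_apply,
    reindex_apply, submatrix_mul_equiv, ← star_eq_conjTranspose, hU.1, submatrix_one_equiv]

theorem reindex_mem_specialUnitaryGroup (e : m ≃ n) {U : Matrix m m R}
    (hU : U ∈ specialUnitaryGroup m R) : reindex e e U ∈ specialUnitaryGroup n R :=
  ⟨reindex_mem_unitaryGroup e hU.1, (det_reindex_self e U).trans hU.2⟩

theorem kronecker_mem_specialUnitaryGroup {A : Matrix m m R} {B : Matrix n n R}
    (hA : A ∈ specialUnitaryGroup m R) (hB : B ∈ specialUnitaryGroup n R) :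
    A ⊗ₖ B ∈ specialUnitaryGroup (m × n) R := by
  rw [mem_specialUnitaryGroup_iff] at hA hB ⊢
  refine ⟨kronecker_mem_unitary hA.1 hB.1, ?_⟩
  rw [det_kronecker, hA.2, hB.2, one_pow, one_pow, one_mul]

theorem conjTranspose_mul_mul_mem_specialUnitaryGroup {U M : Matrix n n R}
    (hU : U ∈ unitaryGroup n R) (hM : M ∈ specialUnitaryGroup n R) :
    Uᴴ * M * U ∈ specialUnitaryGroup n R := by
  rw [mem_specialUnitaryGroup_iff] at hM ⊢
  refine ⟨mul_mem (mul_mem (Unitary.star_mem hU) hM.1) hU, ?_⟩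
  rw [det_mul, det_mul, hM.2, mul_one, ← det_mul, ← star_eq_conjTranspose, hU.1, det_one]

theorem adjugate_eq_star_of_mem_specialUnitaryGroup {A : Matrix n n R}
    (hA : A ∈ specialUnitaryGroup n R) : adjugate A = star A :=
  calc adjugate A = star A * A * adjugate A := by rw [hA.1.1, Matrix.one_mul]
    _ = star A := by
      rw [Matrix.mul_assoc, mul_adjugate, (mem_specialUnitaryGroup_iff.mp hA).2, one_smul,
        Matrix.mul_one]

variable (R) in
def spinFlip : Matrix (Fin 2) (Fin 2) R :=
  !![0, 1; -1, 0]

variable (R) in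
theorem spinFlip_mem_unitaryGroup : spinFlip R ∈ unitaryGroup (Fin 2) R := by
  rw [mem_unitaryGroup_iff']
  ext i j
  fin_cases i <;> fin_cases j <;> simp [spinFlip, mul_apply, Fin.sum_univ_two]

theorem spinFlip_mul_mul_conjTranspose (A : Matrix (Fin 2) (Fin 2) R) :
    spinFlip R * A * (spinFlip R)ᴴ = (adjugate A)ᵀ := by
  ext i j
  fin_cases i <;> fin_cases j <;>
    simp [spinFlip, adjugate_fin_two, mul_apply, vecMul, dotProduct, Fin.sum_univ_two]

theorem map_starRingEnd_of_mem_specialUnitaryGroup {A : Matrix (Fin 2) (Fin 2) R}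
    (hA : A ∈ specialUnitaryGroup (Fin 2) R) :
    A.map (starRingEnd R) = spinFlip R * A * (spinFlip R)ᴴ := by
  rw [spinFlip_mul_mul_conjTranspose, adjugate_eq_star_of_mem_specialUnitaryGroup hA]
  rfl

omit [Fintype m] [DecidableEq m] [Fintype n] [DecidableEq n] in
theorem map_re_map_ofReal {M : Matrix m n ℂ} (hM : M.map (starRingEnd ℂ) = M) :
    (M.map re).map ofReal = M := by
  ext i j
  exact conj_eq_iff_re.mp (congrFun₂ hM i j)

theorem map_ofReal_mem_unitaryGroup_iff {V : Matrix n n ℝ} :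
    V.map ofReal ∈ unitaryGroup n ℂ ↔ V ∈ orthogonalGroup n ℝ := by
  have hstar : star (V.map ofReal) = Vᵀ.map ofReal := by
    ext i j
    simp
  have hmul : Vᵀ.map ofReal * V.map ofReal = (Vᵀ * V).map ofReal :=
    (Matrix.map_mul (f := ofRealHom)).symm
  rw [mem_unitaryGroup_iff', mem_orthogonalGroup_iff', hstar, hmul,
    ← Matrix.map_one _ ofReal_zero ofReal_one, (map_injective ofReal_injective).eq_iff]

theorem exists_mem_specialOrthogonalGroup_of_map_starRingEnd_eq {M : Matrix n n ℂ}
    (hM : M ∈ specialUnitaryGroup n ℂ) (hreal : M.map (starRingEnd ℂ) = M) :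
    ∃ V ∈ specialOrthogonalGroup n ℝ, V.map ofReal = M := by
  refine ⟨M.map re, mem_specialOrthogonalGroup_iff.mpr ⟨?_, ?_⟩, map_re_map_ofReal hreal⟩
  · rw [← map_ofReal_mem_unitaryGroup_iff, map_re_map_ofReal hreal]
    exact hM.1
  · apply ofReal_injective
    rw [← ofRealHom_eq_coe, RingHom.map_det]
    exact (congrArg det (map_re_map_ofReal hreal)).trans hM.2

end Matrix

theorem reindex_spinFlip_kronecker_spinFlip :
    reindex finProdFinEquiv finProdFinEquiv (spinFlip ℂ ⊗ₖ spinFlip ℂ) =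
      !![0, 0, 0, 1; 0, 0, -1, 0; 0, -1, 0, 0; 1, 0, 0, 0] := by
  ext i j
  simp only [reindex_apply, submatrix_apply, kroneckerMap_apply, finProdFinEquiv_symm_apply]
  fin_cases i <;> fin_cases j <;> simp [spinFlip, Fin.divNat, Fin.modNat]

theorem entangler_mem_unitaryGroup : entangler ∈ unitaryGroup (Fin 4) ℂ := by
  rw [mem_unitaryGroup_iff']
  ext i j
  fin_cases i <;> fin_cases j <;>
    simp [entangler, mul_apply, Fin.sum_univ_four] <;> ring_nf <;> simp [← ofReal_pow]

theorem entangler_map_starRingEnd :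
    entangler.map (starRingEnd ℂ) =
      reindex finProdFinEquiv finProdFinEquiv (spinFlip ℂ ⊗ₖ spinFlip ℂ) * entangler := by
  rw [reindex_spinFlip_kronecker_spinFlip]
  ext i j
  fin_cases i <;> fin_cases j <;> simp [entangler, mul_apply, Fin.sum_univ_four]

theorem magic_basis_tensor_real (A B : Matrix (Fin 2) (Fin 2) ℂ)
    (hA : A ∈ Matrix.unitaryGroup (Fin 2) ℂ) (hAdet : A.det = 1)
    (hB : B ∈ Matrix.unitaryGroup (Fin 2) ℂ) (hBdet : B.det = 1) :
    ∃ V : Matrix (Fin 4) (Fin 4) ℝ,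
      V ∈ Matrix.orthogonalGroup (Fin 4) ℝ ∧ V.det = 1 ∧
      entanglerᴴ * (Matrix.reindex finProdFinEquiv finProdFinEquiv (A ⊗ₖ B)) * entangler
        = V.map Complex.ofReal := by
  have hASU : A ∈ specialUnitaryGroup (Fin 2) ℂ := mem_specialUnitaryGroup_iff.mpr ⟨hA, hAdet⟩
  have hBSU : B ∈ specialUnitaryGroup (Fin 2) ℂ := mem_specialUnitaryGroup_iff.mpr ⟨hB, hBdet⟩
  have hKSU := reindex_mem_specialUnitaryGroup finProdFinEquiv
    (kronecker_mem_specialUnitaryGroup hASU hBSU)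
  have hS := reindex_mem_unitaryGroup finProdFinEquiv
    (kronecker_mem_unitary (spinFlip_mem_unitaryGroup ℂ) (spinFlip_mem_unitaryGroup ℂ))
  have hK := map_starRingEnd_reindex_eq_mul_mul finProdFinEquiv <|
    map_starRingEnd_kronecker_eq_mul_mul (map_starRingEnd_of_mem_specialUnitaryGroup hASU)
      (map_starRingEnd_of_mem_specialUnitaryGroup hBSU)
  obtain ⟨V, hV, hVM⟩ := exists_mem_specialOrthogonalGroup_of_map_starRingEnd_eq
    (conjTranspose_mul_mul_mem_specialUnitaryGroup entangler_mem_unitaryGroup hKSU)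
    (map_starRingEnd_conjTranspose_mul_mul hS.1 entangler_map_starRingEnd hK)
  exact ⟨V, hV.1, hV.2, hVM.symm⟩
end

section
/- The map (A, B) ↦ E* (A ⊗ B) E from SU(2) × SU(2) to SO(4) is surjective: every V ∈ SO(4) arises as E* (A ⊗ B) E for some A, B ∈ SU(2). -/
open Matrix Complex Kronecker

/-! ### Basic matrices -/

noncomputable def E0 : Matrix (Fin 4) (Fin 4) ℂ :=
  !![1, I, 0, 0; 0, 0, I, 1; 0, 0, I, -1; 1, -I, 0, 0]

noncomputable def F (A B : Matrix (Fin 2) (Fin 2) ℂ) : Matrix (Fin 4) (Fin 4) ℂ :=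
  entanglerᴴ * (Matrix.reindex finProdFinEquiv finProdFinEquiv (A ⊗ₖ B)) * entangler

noncomputable def Mq (a b c d : ℝ) : Matrix (Fin 2) (Fin 2) ℂ :=
  !![(a : ℂ) + b * I, (c : ℂ) + d * I; -(c : ℂ) + d * I, (a : ℂ) - b * I]

def Lr (a b c d : ℝ) : Matrix (Fin 4) (Fin 4) ℝ :=
  !![a, -b, -d, -c; b, a, c, -d; d, -c, a, b; c, d, -b, a]

def Cr (a b c d : ℝ) : Matrix (Fin 4) (Fin 4) ℝ :=
  !![a^2+b^2+c^2+d^2, 0, 0, 0;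
     0, a^2+b^2-c^2-d^2, 2*(a*c+b*d), 2*(b*c-a*d);
     0, 2*(b*d-a*c), a^2-b^2-c^2+d^2, 2*(a*b+c*d);
     0, 2*(a*d+b*c), 2*(c*d-a*b), a^2-b^2+c^2-d^2]

/-! ### entangler basics -/

lemma E0_mul_conjTranspose : E0 * E0ᴴ = (2 : ℂ) • 1 := by
  ext i j
  fin_cases i <;> fin_cases j <;>
    simp [E0, Matrix.mul_apply, Fin.sum_univ_four, Matrix.conjTranspose_apply,
      Complex.ext_iff] <;> norm_num

lemma sqrt2_sq : ((Real.sqrt 2 : ℝ) : ℂ) * ((Real.sqrt 2 : ℝ) : ℂ) = 2 := by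
  have : Real.sqrt 2 * Real.sqrt 2 = 2 := Real.mul_self_sqrt (by norm_num)
  exact_mod_cast this

lemma star_inv_sqrt2 : star (((Real.sqrt 2 : ℝ) : ℂ))⁻¹ = (((Real.sqrt 2 : ℝ) : ℂ))⁻¹ := by
  simp [star_inv₀, Complex.star_def, Complex.conj_ofReal]

lemma entangler_conjTranspose : entanglerᴴ = ((Real.sqrt 2 : ℂ))⁻¹ • E0ᴴ := by
  rw [show entangler = ((Real.sqrt 2 : ℂ))⁻¹ • E0 from rfl, Matrix.conjTranspose_smul,
    star_inv_sqrt2]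

lemma inv_sqrt2_sq : ((Real.sqrt 2 : ℂ))⁻¹ * ((Real.sqrt 2 : ℂ))⁻¹ = (2 : ℂ)⁻¹ := by
  rw [← mul_inv, sqrt2_sq]

lemma entangler_mul_conjTranspose : entangler * entanglerᴴ = 1 := by
  rw [entangler_conjTranspose, show entangler = ((Real.sqrt 2 : ℂ))⁻¹ • E0 from rfl,
    Matrix.smul_mul, Matrix.mul_smul, smul_smul, inv_sqrt2_sq, E0_mul_conjTranspose,
    smul_smul]
  norm_num

lemma F_eq (A B : Matrix (Fin 2) (Fin 2) ℂ) :
    F A B = (2 : ℂ)⁻¹ •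
      (E0ᴴ * (Matrix.reindex finProdFinEquiv finProdFinEquiv (A ⊗ₖ B)) * E0) := by
  rw [F, entangler_conjTranspose, show entangler = ((Real.sqrt 2 : ℂ))⁻¹ • E0 from rfl,
    Matrix.smul_mul, Matrix.mul_smul, Matrix.smul_mul, smul_smul, inv_sqrt2_sq]

lemma kron4 (A B : Matrix (Fin 2) (Fin 2) ℂ) :
    Matrix.reindex finProdFinEquiv finProdFinEquiv (A ⊗ₖ B) =
    !![A 0 0 * B 0 0, A 0 0 * B 0 1, A 0 1 * B 0 0, A 0 1 * B 0 1;
      A 0 0 * B 1 0, A 0 0 * B 1 1, A 0 1 * B 1 0, A 0 1 * B 1 1;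
      A 1 0 * B 0 0, A 1 0 * B 0 1, A 1 1 * B 0 0, A 1 1 * B 0 1;
      A 1 0 * B 1 0, A 1 0 * B 1 1, A 1 1 * B 1 0, A 1 1 * B 1 1] := by
  ext i j
  fin_cases i <;> fin_cases j <;> rfl

lemma reindex_mul (M N : Matrix (Fin 2 × Fin 2) (Fin 2 × Fin 2) ℂ) :
    Matrix.reindex finProdFinEquiv finProdFinEquiv M *
      Matrix.reindex finProdFinEquiv finProdFinEquiv N =
    Matrix.reindex finProdFinEquiv finProdFinEquiv (M * N) := by
  simp only [Matrix.reindex_apply]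
  rw [Matrix.submatrix_mul_equiv]

lemma F_mul (A B A' B' : Matrix (Fin 2) (Fin 2) ℂ) :
    F A B * F A' B' = F (A * A') (B * B') := by
  unfold F
  rw [mul_kronecker_mul, ← reindex_mul]
  have h := entangler_mul_conjTranspose
  generalize Matrix.reindex finProdFinEquiv finProdFinEquiv
      (A ⊗ₖ B : Matrix (Fin 2 × Fin 2) (Fin 2 × Fin 2) ℂ) = K at *
  generalize Matrix.reindex finProdFinEquiv finProdFinEquiv
      (A' ⊗ₖ B' : Matrix (Fin 2 × Fin 2) (Fin 2 × Fin 2) ℂ) = K' at *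
  calc entanglerᴴ * K * entangler * (entanglerᴴ * K' * entangler)
      = entanglerᴴ * K * (entangler * entanglerᴴ) * K' * entangler := by
        simp only [Matrix.mul_assoc]
    _ = entanglerᴴ * (K * K') * entangler := by
        rw [h]; simp only [Matrix.mul_assoc, Matrix.mul_one]

/-! ### the two key computations -/

set_option maxHeartbeats 2000000 in
lemma FL (a b c d : ℝ) : F (Mq a b c d) 1 = (Lr a b c d).map Complex.ofReal := by
  rw [F_eq, kron4]
  ext i j
  fin_cases i <;> fin_cases j <;>
    (simp [Mq, E0, Lr, Matrix.mul_apply, Fin.sum_univ_four, Matrix.smul_apply,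
      Matrix.map_apply, Matrix.conjTranspose_apply, Matrix.one_apply,
      Matrix.vecHead, Matrix.vecTail, Complex.ext_iff]
     <;> (try constructor)
     <;> (first
        | trivial
        | ring1
        | (simp only [← Complex.ofReal_pow, Complex.ofReal_re, Complex.ofReal_im]
           <;> first | trivial | ring1)))

set_option maxHeartbeats 2000000 in
lemma FC (a b c d : ℝ) :
    F (Mq a b c d) (Mq a (-b) c (-d)) = (Cr a b c d).map Complex.ofReal := by
  rw [F_eq, kron4]
  ext i j
  fin_cases i <;> fin_cases j <;>
    (simp [Mq, E0, Cr, Matrix.mul_apply, Fin.sum_univ_four, Matrix.smul_apply,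
      Matrix.map_apply, Matrix.conjTranspose_apply,
      Matrix.vecHead, Matrix.vecTail, Complex.ext_iff]
     <;> (try constructor)
     <;> (first
        | trivial
        | ring1
        | (simp only [← Complex.ofReal_pow, Complex.ofReal_re, Complex.ofReal_im]
           <;> first | trivial | ring1)))

/-! ### SU(2) facts -/

lemma Mq_mem (a b c d : ℝ) (h : a^2+b^2+c^2+d^2 = 1) :
    Mq a b c d ∈ Matrix.unitaryGroup (Fin 2) ℂ := by
  rw [Matrix.mem_unitaryGroup_iff]
  ext i j
  fin_cases i <;> fin_cases j <;>
    simp [Mq, Matrix.mul_apply, Fin.sum_univ_two, Matrix.conjTranspose_apply,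
      Matrix.one_apply, Complex.ext_iff] <;>
    constructor <;> (try trivial) <;> nlinarith [h]

lemma Mq_det (a b c d : ℝ) (h : a^2+b^2+c^2+d^2 = 1) : (Mq a b c d).det = 1 := by
  rw [Matrix.det_fin_two]
  simp [Mq, Complex.ext_iff]
  constructor <;> nlinarith [h]

/-! ### determinant of 4×4 -/

lemma det4 (M : Matrix (Fin 4) (Fin 4) ℝ) :
    M.det = M 0 0 * (M 1 1 * (M 2 2 * M 3 3 - M 2 3 * M 3 2)
                   - M 1 2 * (M 2 1 * M 3 3 - M 2 3 * M 3 1)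
                   + M 1 3 * (M 2 1 * M 3 2 - M 2 2 * M 3 1))
      - M 0 1 * (M 1 0 * (M 2 2 * M 3 3 - M 2 3 * M 3 2)
               - M 1 2 * (M 2 0 * M 3 3 - M 2 3 * M 3 0)
               + M 1 3 * (M 2 0 * M 3 2 - M 2 2 * M 3 0))
      + M 0 2 * (M 1 0 * (M 2 1 * M 3 3 - M 2 3 * M 3 1)
               - M 1 1 * (M 2 0 * M 3 3 - M 2 3 * M 3 0)
               + M 1 3 * (M 2 0 * M 3 1 - M 2 1 * M 3 0))
      - M 0 3 * (M 1 0 * (M 2 1 * M 3 2 - M 2 2 * M 3 1)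
               - M 1 1 * (M 2 0 * M 3 2 - M 2 2 * M 3 0)
               + M 1 2 * (M 2 0 * M 3 1 - M 2 1 * M 3 0)) := by
  rw [Matrix.det_succ_row_zero]
  simp [Fin.sum_univ_succ, Matrix.det_succ_row_zero, Fin.succAbove,
    Matrix.det_fin_two, show (Fin.succ (2 : Fin 3)) = (3 : Fin 4) from rfl,
    show (Fin.castSucc (2 : Fin 3)) = (2 : Fin 4) from rfl]
  ring

/-! ### Lr and Cr facts -/

lemma Lr_orth (a b c d : ℝ) (h : a^2+b^2+c^2+d^2 = 1) :
    (Lr a b c d)ᵀ * Lr a b c d = 1 := by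
  ext i j
  fin_cases i <;> fin_cases j <;>
    (simp [Lr, Matrix.mul_apply, Fin.sum_univ_four, Matrix.transpose_apply,
      Matrix.one_apply, Matrix.vecHead, Matrix.vecTail] <;> linarith [h])

lemma Lr_det (a b c d : ℝ) (h : a^2+b^2+c^2+d^2 = 1) : (Lr a b c d).det = 1 := by
  rw [det4]
  simp [Lr]
  nlinarith [h]

lemma Cr_orth (a b c d : ℝ) (h : a^2+b^2+c^2+d^2 = 1) :
    (Cr a b c d)ᵀ * Cr a b c d = 1 := by
  ext i j
  fin_cases i <;> fin_cases j <;>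
    (simp [Cr, Matrix.mul_apply, Fin.sum_univ_four, Matrix.transpose_apply,
      Matrix.one_apply, Matrix.vecHead, Matrix.vecTail] <;> nlinarith [h])

lemma Cr_det (a b c d : ℝ) (h : a^2+b^2+c^2+d^2 = 1) : (Cr a b c d).det = 1 := by
  rw [det4]
  simp [Cr, Matrix.vecHead, Matrix.vecTail]
  linear_combination ((a^2+b^2+c^2+d^2)^3 + (a^2+b^2+c^2+d^2)^2 + (a^2+b^2+c^2+d^2) + 1) * h

/-! ### small helpers -/

lemma sq3_zero {x y z : ℝ} (h : x*x + y*y + z*z = 0) : x = 0 ∧ y = 0 ∧ z = 0 := by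
  refine ⟨?_, ?_, ?_⟩ <;>
  · apply mul_self_eq_zero.mp
    apply le_antisymm _ (mul_self_nonneg _)
    nlinarith [mul_self_nonneg x, mul_self_nonneg y, mul_self_nonneg z]

lemma sq2_zero {x y : ℝ} (h : x*x + y*y = 0) : x = 0 ∧ y = 0 := by
  have := sq3_zero (x := x) (y := y) (z := 0) (by linarith)
  exact ⟨this.1, this.2.1⟩

lemma sandwich (L W : Matrix (Fin 4) (Fin 4) ℝ) (hL : L * Lᵀ = 1) (hW : Wᵀ * W = 1) :
    (Lᵀ * W)ᵀ * (Lᵀ * W) = 1 := by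
  rw [Matrix.transpose_mul, Matrix.transpose_transpose, Matrix.mul_assoc,
    ← Matrix.mul_assoc L, hL, Matrix.one_mul, hW]

lemma sandwich2 (L W : Matrix (Fin 4) (Fin 4) ℝ) (hW : W * Wᵀ = 1) (hL : Lᵀ * L = 1) :
    (Lᵀ * W) * (Lᵀ * W)ᵀ = 1 := by
  rw [Matrix.transpose_mul, Matrix.transpose_transpose, Matrix.mul_assoc,
    ← Matrix.mul_assoc W, hW, Matrix.one_mul, hL]

lemma exists_p (u1 u2 u3 : ℝ) (h : u1^2+u2^2+u3^2 = 1) :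
    ∃ a b c d : ℝ, a^2+b^2+c^2+d^2 = 1 ∧ a^2+b^2-c^2-d^2 = u1 ∧
      2*(b*d - a*c) = u2 ∧ 2*(a*d + b*c) = u3 := by
  by_cases hu : u1 = -1
  · have h23 : u2*u2 + u3*u3 = 0 := by nlinarith [h]
    obtain ⟨h2, h3⟩ := sq2_zero h23
    exact ⟨0, 0, 1, 0, by norm_num, by rw [hu]; norm_num, by rw [h2]; ring,
      by rw [h3]; ring⟩
  · have h1le : 0 ≤ 1 + u1 := by nlinarith [sq_nonneg u2, sq_nonneg u3, sq_nonneg (u1+1)]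
    have h1lt : 0 < 1 + u1 := lt_of_le_of_ne h1le (by
      intro hc
      exact hu (by linarith))
    set a := Real.sqrt ((1+u1)/2) with ha
    have ha2 : a^2 = (1+u1)/2 := Real.sq_sqrt (by linarith)
    have hapos : 0 < a := Real.sqrt_pos.mpr (by linarith)
    have hane : a ≠ 0 := ne_of_gt hapos
    refine ⟨a, 0, -u2/(2*a), u3/(2*a), ?_, ?_, ?_, ?_⟩
    · field_simp
      nlinarith [ha2, h]
    · field_simp
      nlinarith [ha2, h]
    · field_simp
      ring
    · field_simp
      ring

lemma exists_r (w x : ℝ) (h : w^2+x^2 = 1) :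
    ∃ a b : ℝ, a^2+b^2 = 1 ∧ a^2-b^2 = w ∧ 2*(a*b) = x := by
  by_cases hw : w = -1
  · have hx : x*x + (0:ℝ)*0 = 0 := by nlinarith [h]
    have hx0 : x = 0 := (sq2_zero hx).1
    exact ⟨0, 1, by norm_num, by rw [hw]; norm_num, by rw [hx0]; ring⟩
  · have h1le : 0 ≤ 1 + w := by nlinarith [sq_nonneg x, sq_nonneg (w+1)]
    have h1lt : 0 < 1 + w := lt_of_le_of_ne h1le (by intro hc; exact hw (by linarith))
    set a := Real.sqrt ((1+w)/2) with ha
    have ha2 : a^2 = (1+w)/2 := Real.sq_sqrt (by linarith)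
    have hapos : 0 < a := Real.sqrt_pos.mpr (by linarith)
    have hane : a ≠ 0 := ne_of_gt hapos
    refine ⟨a, x/(2*a), ?_, ?_, ?_⟩
    · field_simp
      nlinarith [ha2, h]
    · field_simp
      nlinarith [ha2, h]
    · field_simp



theorem decomp (V : Matrix (Fin 4) (Fin 4) ℝ) (h1 : Vᵀ * V = 1) (h2 : V * Vᵀ = 1)
    (h3 : V.det = 1) :
    ∃ qa qb qc qd pa pb pc pd ra rb : ℝ,
      (qa^2+qb^2+qc^2+qd^2 = 1) ∧ (pa^2+pb^2+pc^2+pd^2 = 1) ∧ (ra^2+rb^2+0^2+0^2 = 1) ∧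
      V = Lr qa qb qc qd * (Cr pa pb pc pd * Cr ra rb 0 0) := by
  have ht00 : V 0 0 * V 0 0 + V 1 0 * V 1 0 + V 2 0 * V 2 0 + V 3 0 * V 3 0 = 1 := by
    have h := congrFun (congrFun h1 0) 0
    simpa [Matrix.mul_apply, Fin.sum_univ_four, Matrix.transpose_apply,
      Matrix.one_apply] using h
  have hqn : (V 0 0)^2 + (V 1 0)^2 + (V 3 0)^2 + (V 2 0)^2 = 1 := by linear_combination ht00
  set L := Lr (V 0 0) (V 1 0) (V 3 0) (V 2 0) with hL
  have hLo : Lᵀ * L = 1 := Lr_orth _ _ _ _ hqn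
  have hLo' : L * Lᵀ = 1 := mul_eq_one_comm.mp hLo
  set W1 := Lᵀ * V with hW1def
  have hVW1 : V = L * W1 := by rw [hW1def, ← Matrix.mul_assoc, hLo', Matrix.one_mul]
  have hW1o : W1ᵀ * W1 = 1 := sandwich L V hLo' h1
  have hW1o' : W1 * W1ᵀ = 1 := sandwich2 L V h2 hLo
  have hW1det : W1.det = 1 := by
    rw [hW1def, Matrix.det_mul, Matrix.det_transpose, hL, Lr_det _ _ _ _ hqn, h3]
    norm_num
  have e00 : W1 0 0 = 1 := by
    rw [hW1def, hL]
    simp [Lr, Matrix.mul_apply, Fin.sum_univ_four, Matrix.transpose_apply,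
      Matrix.vecHead, Matrix.vecTail]
    linear_combination ht00
  have e10 : W1 1 0 = 0 := by
    rw [hW1def, hL]
    simp [Lr, Matrix.mul_apply, Fin.sum_univ_four, Matrix.transpose_apply,
      Matrix.vecHead, Matrix.vecTail]
    ring
  have e20 : W1 2 0 = 0 := by
    rw [hW1def, hL]
    simp [Lr, Matrix.mul_apply, Fin.sum_univ_four, Matrix.transpose_apply,
      Matrix.vecHead, Matrix.vecTail]
    ring
  have e30 : W1 3 0 = 0 := by
    rw [hW1def, hL]
    simp [Lr, Matrix.mul_apply, Fin.sum_univ_four, Matrix.transpose_apply,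
      Matrix.vecHead, Matrix.vecTail]
    ring
  have hrow : W1 0 1 = 0 ∧ W1 0 2 = 0 ∧ W1 0 3 = 0 := by
    have h00 := congrFun (congrFun hW1o' 0) 0
    simp [Matrix.mul_apply, Fin.sum_univ_four, Matrix.transpose_apply,
      Matrix.one_apply, e00] at h00
    exact sq3_zero (by linarith)
  obtain ⟨e01, e02, e03⟩ := hrow
  have hu : W1 1 1 * W1 1 1 + W1 2 1 * W1 2 1 + W1 3 1 * W1 3 1 = 1 := by
    have h11 := congrFun (congrFun hW1o 1) 1
    simp [Matrix.mul_apply, Fin.sum_univ_four, Matrix.transpose_apply,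
      Matrix.one_apply, e01] at h11
    linarith
  obtain ⟨pa, pb, pc, pd, hpn, hp1, hp2, hp3⟩ :=
    exists_p (W1 1 1) (W1 2 1) (W1 3 1) (by linear_combination hu)
  set C1 := Cr pa pb pc pd with hC1
  have hC1o : C1ᵀ * C1 = 1 := Cr_orth _ _ _ _ hpn
  have hC1o' : C1 * C1ᵀ = 1 := mul_eq_one_comm.mp hC1o
  set W2 := C1ᵀ * W1 with hW2def
  have hW1W2 : W1 = C1 * W2 := by rw [hW2def, ← Matrix.mul_assoc, hC1o', Matrix.one_mul]
  have hW2o : W2ᵀ * W2 = 1 := sandwich C1 W1 hC1o' hW1o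
  have hW2o' : W2 * W2ᵀ = 1 := sandwich2 C1 W1 hW1o' hC1o
  have hW2det : W2.det = 1 := by
    rw [hW2def, Matrix.det_mul, Matrix.det_transpose, hC1, Cr_det _ _ _ _ hpn, hW1det]
    norm_num
  have f00 : W2 0 0 = 1 := by
    rw [hW2def, hC1]
    simp [Cr, Matrix.mul_apply, Fin.sum_univ_four, Matrix.transpose_apply,
      Matrix.vecHead, Matrix.vecTail, e00, e10, e20, e30]
    linear_combination hpn
  have f10 : W2 1 0 = 0 := by
    rw [hW2def, hC1]
    simp [Cr, Matrix.mul_apply, Fin.sum_univ_four, Matrix.transpose_apply,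
      Matrix.vecHead, Matrix.vecTail, e00, e10, e20, e30]
  have f20 : W2 2 0 = 0 := by
    rw [hW2def, hC1]
    simp [Cr, Matrix.mul_apply, Fin.sum_univ_four, Matrix.transpose_apply,
      Matrix.vecHead, Matrix.vecTail, e00, e10, e20, e30]
  have f30 : W2 3 0 = 0 := by
    rw [hW2def, hC1]
    simp [Cr, Matrix.mul_apply, Fin.sum_univ_four, Matrix.transpose_apply,
      Matrix.vecHead, Matrix.vecTail, e00, e10, e20, e30]
  have f01 : W2 0 1 = 0 := by
    rw [hW2def, hC1]
    simp [Cr, Matrix.mul_apply, Fin.sum_univ_four, Matrix.transpose_apply,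
      Matrix.vecHead, Matrix.vecTail, e01]
  have f11 : W2 1 1 = 1 := by
    rw [hW2def, hC1]
    simp [Cr, Matrix.mul_apply, Fin.sum_univ_four, Matrix.transpose_apply,
      Matrix.vecHead, Matrix.vecTail, e01]
    linear_combination (W1 1 1) * hp1 + (W1 2 1) * hp2 + (W1 3 1) * hp3 + hu
  have f21 : W2 2 1 = 0 := by
    rw [hW2def, hC1]
    simp [Cr, Matrix.mul_apply, Fin.sum_univ_four, Matrix.transpose_apply,
      Matrix.vecHead, Matrix.vecTail, e01]
    linear_combination (-(2*(pa*pc+pb*pd))) * hp1 - (pa^2-pb^2-pc^2+pd^2) * hp2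
      - (2*(pc*pd-pa*pb)) * hp3
  have f31 : W2 3 1 = 0 := by
    rw [hW2def, hC1]
    simp [Cr, Matrix.mul_apply, Fin.sum_univ_four, Matrix.transpose_apply,
      Matrix.vecHead, Matrix.vecTail, e01]
    linear_combination (-(2*(pb*pc-pa*pd))) * hp1 - (2*(pa*pb+pc*pd)) * hp2
      - (pa^2-pb^2+pc^2-pd^2) * hp3
  have hrow0 : W2 0 2 = 0 ∧ W2 0 3 = 0 := by
    have h00 := congrFun (congrFun hW2o' 0) 0
    simp [Matrix.mul_apply, Fin.sum_univ_four, Matrix.transpose_apply,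
      Matrix.one_apply, f00, f01] at h00
    exact sq2_zero (by linarith)
  obtain ⟨f02, f03⟩ := hrow0
  have hrow1 : W2 1 2 = 0 ∧ W2 1 3 = 0 := by
    have h11 := congrFun (congrFun hW2o' 1) 1
    simp [Matrix.mul_apply, Fin.sum_univ_four, Matrix.transpose_apply,
      Matrix.one_apply, f10, f11] at h11
    exact sq2_zero (by linarith)
  obtain ⟨f12, f13⟩ := hrow1
  have hb1 : W2 2 2 * W2 2 2 + W2 3 2 * W2 3 2 = 1 := by
    have h := congrFun (congrFun hW2o 2) 2
    simp [Matrix.mul_apply, Fin.sum_univ_four, Matrix.transpose_apply,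
      Matrix.one_apply, f02, f12] at h
    linarith
  have hb2 : W2 2 3 * W2 2 3 + W2 3 3 * W2 3 3 = 1 := by
    have h := congrFun (congrFun hW2o 3) 3
    simp [Matrix.mul_apply, Fin.sum_univ_four, Matrix.transpose_apply,
      Matrix.one_apply, f03, f13] at h
    linarith
  have hdet22 : W2 2 2 * W2 3 3 - W2 2 3 * W2 3 2 = 1 := by
    have h := hW2det
    rw [det4] at h
    rw [f00, f01, f02, f03, f10, f11, f12, f13, f20, f21, f30, f31] at h
    linear_combination h
  have hsq : (W2 3 3 - W2 2 2)*(W2 3 3 - W2 2 2)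
      + (W2 2 3 + W2 3 2)*(W2 2 3 + W2 3 2) = 0 := by
    linear_combination hb1 + hb2 - 2*hdet22
  obtain ⟨hzw0, hyx0⟩ := sq2_zero hsq
  have hzw : W2 3 3 = W2 2 2 := by linarith
  have hyx : W2 3 2 = -(W2 2 3) := by linarith
  have hwx : (W2 2 2)^2 + (W2 2 3)^2 = 1 := by
    linear_combination hb2 - (W2 3 3 + W2 2 2) * hzw
  obtain ⟨ra, rb, hrn, hr1, hr2⟩ := exists_r (W2 2 2) (W2 2 3) hwx
  have hW2C : W2 = Cr ra rb 0 0 := by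
    ext i j
    fin_cases i <;> fin_cases j
    · simp [Cr, Matrix.vecHead, Matrix.vecTail]; linear_combination f00 - hrn
    · simp [Cr, Matrix.vecHead, Matrix.vecTail]; linear_combination f01
    · simp [Cr, Matrix.vecHead, Matrix.vecTail]; linear_combination f02
    · simp [Cr, Matrix.vecHead, Matrix.vecTail]; linear_combination f03
    · simp [Cr, Matrix.vecHead, Matrix.vecTail]; linear_combination f10
    · simp [Cr, Matrix.vecHead, Matrix.vecTail]; linear_combination f11 - hrn
    · simp [Cr, Matrix.vecHead, Matrix.vecTail]; linear_combination f12
    · simp [Cr, Matrix.vecHead, Matrix.vecTail]; linear_combination f13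
    · simp [Cr, Matrix.vecHead, Matrix.vecTail]; linear_combination f20
    · simp [Cr, Matrix.vecHead, Matrix.vecTail]; linear_combination f21
    · simp [Cr, Matrix.vecHead, Matrix.vecTail]; linear_combination -hr1
    · simp [Cr, Matrix.vecHead, Matrix.vecTail]; linear_combination -hr2
    · simp [Cr, Matrix.vecHead, Matrix.vecTail]; linear_combination f30
    · simp [Cr, Matrix.vecHead, Matrix.vecTail]; linear_combination f31
    · simp [Cr, Matrix.vecHead, Matrix.vecTail]; linear_combination hyx + hr2
    · simp [Cr, Matrix.vecHead, Matrix.vecTail]; linear_combination hzw - hr1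
  refine ⟨V 0 0, V 1 0, V 3 0, V 2 0, pa, pb, pc, pd, ra, rb, hqn, hpn,
    by linear_combination hrn, ?_⟩
  have hfin : V = L * (C1 * Cr ra rb 0 0) := by
    rw [← hW2C, ← hW1W2, ← hVW1]
  exact hfin

lemma map_ofReal_mul_s9 (M N : Matrix (Fin 4) (Fin 4) ℝ) :
    (M * N).map Complex.ofReal = M.map Complex.ofReal * N.map Complex.ofReal := by
  ext i j
  simp [Matrix.mul_apply, Fin.sum_univ_four, Matrix.map_apply]


theorem magic_basis_surjective (V : Matrix (Fin 4) (Fin 4) ℝ)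
    (hV : V ∈ Matrix.orthogonalGroup (Fin 4) ℝ) (hVdet : V.det = 1) :
    ∃ A B : Matrix (Fin 2) (Fin 2) ℂ,
      A ∈ Matrix.unitaryGroup (Fin 2) ℂ ∧ A.det = 1 ∧
      B ∈ Matrix.unitaryGroup (Fin 2) ℂ ∧ B.det = 1 ∧
      entanglerᴴ * (Matrix.reindex finProdFinEquiv finProdFinEquiv (A ⊗ₖ B)) * entangler
        = V.map Complex.ofReal := by
  have hstar : star V = Vᵀ := by
    rw [Matrix.star_eq_conjTranspose, Matrix.conjTranspose_eq_transpose_of_trivial]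
  have h1 : Vᵀ * V = 1 := by
    have := Matrix.mem_orthogonalGroup_iff' (Fin 4) ℝ |>.mp hV
    exact this
  have h2 : V * Vᵀ = 1 := by
    have := Matrix.mem_orthogonalGroup_iff (Fin 4) ℝ |>.mp hV
    exact this
  obtain ⟨qa, qb, qc, qd, pa, pb, pc, pd, ra, rb, hqn, hpn, hrn, hdec⟩ :=
    decomp V h1 h2 hVdet
  have hrn' : ra^2 + rb^2 + 0^2 + 0^2 = 1 := hrn
  refine ⟨Mq qa qb qc qd * (Mq pa pb pc pd * Mq ra rb 0 0),
    1 * (Mq pa (-pb) pc (-pd) * Mq ra (-rb) 0 (-0)), ?_, ?_, ?_, ?_, ?_⟩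
  · exact mul_mem (Mq_mem _ _ _ _ hqn)
      (mul_mem (Mq_mem _ _ _ _ hpn) (Mq_mem _ _ _ _ hrn'))
  · rw [Matrix.det_mul, Matrix.det_mul, Mq_det _ _ _ _ hqn, Mq_det _ _ _ _ hpn,
      Mq_det _ _ _ _ hrn']
    norm_num
  · refine mul_mem (one_mem _) (mul_mem (Mq_mem _ _ _ _ (by linarith [hpn] : pa^2+(-pb)^2+pc^2+(-pd)^2 = 1))
      (Mq_mem _ _ _ _ (by linarith [hrn'] : ra^2+(-rb)^2+0^2+(-0 : ℝ)^2 = 1)))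
  · rw [Matrix.det_mul, Matrix.det_mul, Matrix.det_one,
      Mq_det _ _ _ _ (by linarith [hpn] : pa^2+(-pb)^2+pc^2+(-pd)^2 = 1),
      Mq_det _ _ _ _ (by linarith [hrn'] : ra^2+(-rb)^2+0^2+(-0 : ℝ)^2 = 1)]
    norm_num
  · show F _ _ = _
    rw [← F_mul, ← F_mul, FL, FC, FC, hdec, map_ofReal_mul_s9, map_ofReal_mul_s9]
end

section
/- For any diagonal unitary √D = diag(a, b, c, d) with entries of modulus 1, the matrix botCNOT · (E √D E*) · botCNOT is block diagonal of the form diag-block(U₄, B₂) with U₄, B₂ ∈ U(2), where E is the entangler matrix and botCNOT is the permutation matrix swapping basis vectors 2 and 4 (swapping |01⟩ and |11⟩). -/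
open Matrix Complex

def botCNOT : Matrix (Fin 4) (Fin 4) ℂ :=
  !![1, 0, 0, 0; 0, 0, 0, 1; 0, 0, 1, 0; 0, 1, 0, 0]

private lemma rhs_eq (U B : Matrix (Fin 2) (Fin 2) ℂ) :
    Matrix.reindex finSumFinEquiv finSumFinEquiv (Matrix.fromBlocks U 0 0 B) =
      !![U 0 0, U 0 1, 0, 0; U 1 0, U 1 1, 0, 0;
         0, 0, B 0 0, B 0 1; 0, 0, B 1 0, B 1 1] := by
  ext i j
  fin_cases i <;> fin_cases j <;> rfl

private lemma core_eq (a b c d : ℂ) :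
    (!![1, I, 0, 0; 0, 0, I, 1; 0, 0, I, -1; 1, -I, 0, 0] : Matrix (Fin 4) (Fin 4) ℂ)
      * Matrix.diagonal ![a, b, c, d]
      * (!![1, I, 0, 0; 0, 0, I, 1; 0, 0, I, -1; 1, -I, 0, 0] : Matrix (Fin 4) (Fin 4) ℂ)ᴴ =
      !![a+b, 0, 0, a-b; 0, c+d, c-d, 0;
         0, c-d, c+d, 0; a-b, 0, 0, a+b] := by
  ext i j
  fin_cases i <;> fin_cases j <;>
    · simp only [Matrix.mul_apply, Fin.sum_univ_four, Matrix.diagonal_apply,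
        Matrix.conjTranspose_apply]
      simp (config := { decide := true })
      try ring_nf
      try simp [Complex.I_sq]
      try ring

private lemma sconj :
    star (((Real.sqrt 2 : ℂ))⁻¹) = ((Real.sqrt 2 : ℂ))⁻¹ := by
  rw [star_inv₀]
  norm_num [Complex.conj_ofReal]

private lemma mid_eq (a b c d : ℂ) :
    entangler * Matrix.diagonal ![a, b, c, d] * entanglerᴴ =
      (2 : ℂ)⁻¹ • !![a+b, 0, 0, a-b; 0, c+d, c-d, 0;
         0, c-d, c+d, 0; a-b, 0, 0, a+b] := by
  have hs : ((Real.sqrt 2 : ℂ))⁻¹ * ((Real.sqrt 2 : ℂ))⁻¹ = (2 : ℂ)⁻¹ := by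
    rw [← mul_inv]; norm_cast
    rw [Real.mul_self_sqrt (by norm_num)]; norm_num
  rw [entangler, Matrix.conjTranspose_smul, sconj, Matrix.smul_mul, Matrix.smul_mul,
    Matrix.mul_smul, smul_smul, hs, core_eq]

private lemma conj_bot (a b c d : ℂ) :
    botCNOT * (!![a+b, 0, 0, a-b; 0, c+d, c-d, 0;
         0, c-d, c+d, 0; a-b, 0, 0, a+b] : Matrix (Fin 4) (Fin 4) ℂ) * botCNOT =
      !![a+b, a-b, 0, 0; a-b, a+b, 0, 0; 0, 0, c+d, c-d; 0, 0, c-d, c+d] := by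
  ext i j
  fin_cases i <;> fin_cases j <;>
    · simp only [botCNOT, Matrix.mul_apply, Fin.sum_univ_four]
      simp (config := { decide := true }) [Matrix.vecHead, Matrix.vecTail]
      try ring

theorem conj_EDEstar_block_diagonal (a b c d : ℂ)
    (ha : ‖a‖ = 1) (hb : ‖b‖ = 1)
    (hc : ‖c‖ = 1) (hd : ‖d‖ = 1) :
    ∃ U₄ B₂ : Matrix (Fin 2) (Fin 2) ℂ,
      U₄ ∈ Matrix.unitaryGroup (Fin 2) ℂ ∧ B₂ ∈ Matrix.unitaryGroup (Fin 2) ℂ ∧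
      botCNOT * (entangler * Matrix.diagonal ![a, b, c, d] * entanglerᴴ) * botCNOT
        = Matrix.reindex finSumFinEquiv finSumFinEquiv (Matrix.fromBlocks U₄ 0 0 B₂) := by
  have ha' : a * (starRingEnd ℂ) a = 1 := by
    rw [Complex.mul_conj]; norm_cast; simp [Complex.normSq_eq_norm_sq, ha]
  have hb' : b * (starRingEnd ℂ) b = 1 := by
    rw [Complex.mul_conj]; norm_cast; simp [Complex.normSq_eq_norm_sq, hb]
  have hc' : c * (starRingEnd ℂ) c = 1 := by
    rw [Complex.mul_conj]; norm_cast; simp [Complex.normSq_eq_norm_sq, hc]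
  have hd' : d * (starRingEnd ℂ) d = 1 := by
    rw [Complex.mul_conj]; norm_cast; simp [Complex.normSq_eq_norm_sq, hd]
  refine ⟨!![(a+b)/2, (a-b)/2; (a-b)/2, (a+b)/2],
          !![(c+d)/2, (c-d)/2; (c-d)/2, (c+d)/2], ?_, ?_, ?_⟩
  · rw [Matrix.mem_unitaryGroup_iff]
    ext i j
    fin_cases i <;> fin_cases j <;>
      simp [Matrix.mul_apply, Fin.sum_univ_two, Matrix.star_apply,
        map_div₀, map_add, map_sub, map_ofNat] <;>
      first
        | linear_combination (ha' + hb') / 2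
        | linear_combination (ha' - hb') / 2
  · rw [Matrix.mem_unitaryGroup_iff]
    ext i j
    fin_cases i <;> fin_cases j <;>
      simp [Matrix.mul_apply, Fin.sum_univ_two, Matrix.star_apply,
        map_div₀, map_add, map_sub, map_ofNat] <;>
      first
        | linear_combination (hc' + hd') / 2
        | linear_combination (hc' - hd') / 2
  · rw [mid_eq, rhs_eq, Matrix.mul_smul, Matrix.smul_mul, conj_bot]
    ext i j
    fin_cases i <;> fin_cases j <;>
      · simp [Matrix.vecHead, Matrix.vecTail]
        try ring
end

section
/- The entangler matrix E satisfies E = botCNOT · topCNOT · (H ⊕ H) · botCNOT · (1 ⊕ 1 ⊕ i ⊕ i as diagonal) · botCNOT, where H ⊕ H is the block-diagonal matrix with the Hadamard matrix H = (1/√2)[[1,1],[1,−1]] in both 2×2 blocks (with rows appropriately as stated: (1/√2)[[1,1,0,0],[1,−1,0,0],[0,0,1,1],[0,0,1,−1]]), topCNOT swaps basis vectors 3 and 4, and botCNOT swaps basis vectors 2 and 4. -/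
open Matrix Complex

def topCNOT : Matrix (Fin 4) (Fin 4) ℂ :=
  !![1, 0, 0, 0; 0, 1, 0, 0; 0, 0, 0, 1; 0, 0, 1, 0]

noncomputable def HH : Matrix (Fin 4) (Fin 4) ℂ :=
  ((Real.sqrt 2 : ℂ))⁻¹ • !![1, 1, 0, 0; 1, -1, 0, 0; 0, 0, 1, 1; 0, 0, 1, -1]

/-! Both CNOTs are permutation matrices, of the transpositions (1 3) and (2 3) (indices from 0).
Conjugating the phase gate by botCNOT permutes its diagonal into diag(1, i, i, 1), multiplying HH
by that scales its columns, and the two leading CNOTs rearrange the rows of the result in the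
order 0, 2, 3, 1, which is exactly E. -/

namespace Matrix

variable {n R : Type*} [DecidableEq n] [Fintype n] [NonAssocSemiring R]

theorem permMatrix_mul_diagonal_mul_permMatrix_inv (σ : Equiv.Perm n) (d : n → R) :
    σ.permMatrix R * diagonal d * (σ⁻¹).permMatrix R = diagonal (d ∘ σ) := by
  rw [PEquiv.toMatrix_toPEquiv_mul, PEquiv.mul_toMatrix_toPEquiv, Equiv.Perm.inv_def,
    Equiv.symm_symm, submatrix_submatrix, Function.comp_id, Function.id_comp,
    submatrix_diagonal_equiv]

end Matrix

open Equiv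

theorem botCNOT_eq_permMatrix : botCNOT = (swap (1 : Fin 4) 3).permMatrix ℂ := by
  ext i j
  fin_cases i <;> fin_cases j <;> simp [botCNOT, swap_apply_def]

theorem topCNOT_eq_permMatrix : topCNOT = (swap (2 : Fin 4) 3).permMatrix ℂ := by
  ext i j
  fin_cases i <;> fin_cases j <;> simp [topCNOT, swap_apply_def]

theorem botCNOT_mul_diagonal_mul_botCNOT (d : Fin 4 → ℂ) :
    botCNOT * diagonal d * botCNOT = diagonal ![d 0, d 3, d 2, d 1] := by
  rw [botCNOT_eq_permMatrix]
  nth_rw 2 [← swap_inv]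
  rw [permMatrix_mul_diagonal_mul_permMatrix_inv]
  congr 1
  ext i
  fin_cases i <;> simp [swap_apply_def]

theorem botCNOT_mul_topCNOT_mul {n : Type*} (M : Matrix (Fin 4) n ℂ) :
    botCNOT * topCNOT * M = M.submatrix ![0, 2, 3, 1] id := by
  rw [botCNOT_eq_permMatrix, topCNOT_eq_permMatrix, Matrix.mul_assoc,
    PEquiv.toMatrix_toPEquiv_mul, PEquiv.toMatrix_toPEquiv_mul, submatrix_submatrix]
  congr 1
  ext i
  fin_cases i <;> simp [swap_apply_def]

theorem entangler_eq_submatrix :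
    entangler = (HH * diagonal ![1, I, I, 1]).submatrix ![0, 2, 3, 1] id := by
  ext i j
  rw [submatrix_apply, mul_diagonal]
  fin_cases i <;> fin_cases j <;> simp [entangler, HH]

theorem entangler_circuit :
    entangler = botCNOT * topCNOT * HH * botCNOT * Matrix.diagonal ![1, 1, I, I] * botCNOT := by
  calc entangler = botCNOT * topCNOT * (HH * diagonal ![1, I, I, 1]) := by
        rw [botCNOT_mul_topCNOT_mul, entangler_eq_submatrix]
    _ = botCNOT * topCNOT * (HH * (botCNOT * diagonal ![1, 1, I, I] * botCNOT)) := by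
        rw [botCNOT_mul_diagonal_mul_botCNOT]; rfl
    _ = _ := by simp only [Matrix.mul_assoc]
end

section
/- For any V ∈ U(2), the 4×4 matrix botCNOT · topC-(XVX) · botCNOT equals the matrix with 1 in positions (1,1) and (4,4), V occupying the central 2×2 block (rows/columns 2,3), and zeros elsewhere. -/
/-!
Both `botCNOT` and `X` are permutation matrices of transpositions, and conjugating by a
transposition's permutation matrix just relabels rows and columns. So `X V X` is `V` with both
indices swapped, and conjugating `topC (X V X)` by `botCNOT` moves that block to rows and
columns 2, 3 while undoing the swap.
-/

open Matrix Complex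

def PauliX : Matrix (Fin 2) (Fin 2) ℂ := !![0, 1; 1, 0]

/-- `topC W` is `W` controlled on the top qubit: `diag-block(1₂, W)`. -/
def topC (W : Matrix (Fin 2) (Fin 2) ℂ) : Matrix (Fin 4) (Fin 4) ℂ :=
  !![1, 0, 0, 0; 0, 1, 0, 0; 0, 0, W 0 0, W 0 1; 0, 0, W 1 0, W 1 1]

theorem Matrix.permMatrix_swap_mul_mul_permMatrix_swap {n R : Type*} [Fintype n]
    [DecidableEq n] [NonAssocSemiring R] (a b : n) (M : Matrix n n R) :
    (Equiv.swap a b).permMatrix R * M * (Equiv.swap a b).permMatrix R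
      = M.submatrix (Equiv.swap a b) (Equiv.swap a b) := by
  rw [PEquiv.toMatrix_toPEquiv_mul, PEquiv.mul_toMatrix_toPEquiv, submatrix_submatrix,
    Equiv.symm_swap]
  rfl

theorem botCNOT_eq_permMatrix_swap : botCNOT = (Equiv.swap (1 : Fin 4) 3).permMatrix ℂ := by
  ext i j
  fin_cases i <;> fin_cases j <;> simp [botCNOT, PEquiv.toMatrix_apply, Equiv.swap_apply_def]

theorem PauliX_eq_permMatrix_swap : PauliX = (Equiv.swap (0 : Fin 2) 1).permMatrix ℂ := by
  ext i j
  fin_cases i <;> fin_cases j <;> simp [PauliX, PEquiv.toMatrix_apply]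

theorem G23_implementation_general (V : Matrix (Fin 2) (Fin 2) ℂ) :
    botCNOT * topC (PauliX * V * PauliX) * botCNOT
      = !![1, 0, 0, 0;
           0, V 0 0, V 0 1, 0;
           0, V 1 0, V 1 1, 0;
           0, 0, 0, 1] := by
  rw [botCNOT_eq_permMatrix_swap, PauliX_eq_permMatrix_swap,
    permMatrix_swap_mul_mul_permMatrix_swap, permMatrix_swap_mul_mul_permMatrix_swap]
  ext i j
  fin_cases i <;> fin_cases j <;> simp [topC, Equiv.swap_apply_def]

theorem G23_implementation (V : Matrix (Fin 2) (Fin 2) ℂ)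
    (hV : V ∈ Matrix.unitaryGroup (Fin 2) ℂ) :
    botCNOT * topC (PauliX * V * PauliX) * botCNOT
      = !![1, 0, 0, 0;
           0, V 0 0, V 0 1, 0;
           0, V 1 0, V 1 1, 0;
           0, 0, 0, 1] :=
  G23_implementation_general V
end
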